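/- Let n be an even positive integer and V a real n×n circulant symmetric positive definite matrix with eigenvalues Λ_k = ∑_{l=0}^{n−1} v_l e^{2πikl/n} (all real and positive). Let P = diag((−1)^k)_{k=0}^{n−1} and Q = V^{−1/2} P V^{1/2} P. Then the characteristic polynomial of Q factors as det(λI − Q) = ∏_{k=0}^{n/2−1} (λ − (Λ_{k+n/2}/Λ_k)^{1/2}) (λ − (Λ_k/Λ_{k+n/2})^{1/2}); that is, the eigenvalues of Q are exactly the numbers (Λ_{k+n/2}/Λ_k)^{±1/2} for k = 0,…,n/2 − 1, counted with multiplicity. -/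

import Mathlib

open Matrix Polynomial

/-- Real matrix power `M ^ p` defined via the continuous functional calculus
(spectral calculus). -/
noncomputable def mpow {k : ℕ} (M : Matrix (Fin k) (Fin k) ℝ) (p : ℝ) :
    Matrix (Fin k) (Fin k) ℝ :=
  cfc (fun x : ℝ => x ^ p) M

/-!
Over `ℂ`, the Fourier matrix `F = ((ζ ^ j) ^ k)` with `ζ = exp (2πi / n)` diagonalises every
symmetric circulant matrix: `V F = F diag Λ`. Conjugating by `P = diag ((-1) ^ k)` multiplies
`v l` by `(-1) ^ l = (ζ ^ m) ^ l`, which shifts the Fourier spectrum by `m = n / 2`: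
`(P V P) F = F diag (Λ (k + m))`. Real powers of `V` are polynomials in `V` (interpolate `x ^ p`
on the finite spectrum), so `Q = V^(-1/2) (P V^(1/2) P)` is diagonalised by `F` as well, with
eigenvalues `√(Λ (k + m) / Λ k)`; pairing `k` with `k + m` gives the factorisation.
-/

theorem aeval_mul_eq_mul_aeval {R S : Type*} [CommSemiring R] [Semiring S] [Algebra R S]
    {a b x : S} (h : a * x = x * b) (q : R[X]) : aeval a q * x = x * aeval b q := by
  have hpow : ∀ n : ℕ, a ^ n * x = x * b ^ n := fun n => (SemiconjBy.pow_right h.symm n).symm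
  induction q using Polynomial.induction_on' with
  | add p r hp hr => rw [map_add, map_add, add_mul, mul_add, hp, hr]
  | monomial n c =>
    rw [aeval_monomial, aeval_monomial, mul_assoc, hpow, ← mul_assoc, ← mul_assoc,
      Algebra.commutes]

theorem aeval_conj_of_mul_self_eq_one {R S : Type*} [CommSemiring R] [Semiring S] [Algebra R S]
    {a p : S} (hp : p * p = 1) (q : R[X]) : p * aeval a q * p = aeval (p * a * p) q := by
  have h : p * a * p * p = p * a := by rw [mul_assoc, hp, mul_one]
  rw [← aeval_mul_eq_mul_aeval h, mul_assoc, hp, mul_one]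

theorem exists_cfc_eq_aeval {R A : Type*} {p : A → Prop} [Field R] [StarRing R] [MetricSpace R]
    [IsTopologicalSemiring R] [ContinuousStar R] [TopologicalSpace A] [Ring A] [StarRing A]
    [Algebra R A] [ContinuousFunctionalCalculus R A p] {a : A} (ha : p a)
    (hfin : (spectrum R a).Finite) (f : R → R) :
    ∃ q : R[X], cfc f a = aeval a q ∧ ∀ x ∈ spectrum R a, q.eval x = f x := by
  classical
  set q := Lagrange.interpolate hfin.toFinset id f
  have hq : ∀ x ∈ spectrum R a, q.eval x = f x := fun x hx =>
    Lagrange.eval_interpolate_at_node f (Set.injOn_id _) (hfin.mem_toFinset.mpr hx)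
  refine ⟨q, ?_, hq⟩
  rw [← cfc_polynomial q a ha]
  exact cfc_congr fun x hx => (hq x hx).symm

section Intertwining

variable {ι : Type*} [Fintype ι] [DecidableEq ι]

theorem Matrix.aeval_diagonal {R S : Type*} [CommSemiring R] [CommSemiring S] [Algebra R S]
    (d : ι → S) (q : R[X]) : aeval (diagonal d) q = diagonal fun i => aeval (d i) q := by
  simpa [aeval_pi_apply] using aeval_algHom_apply (diagonalAlgHom R) d q

theorem Matrix.charpoly_eq_prod_of_mul_eq_mul_diagonal {R : Type*} [CommRing R]
    {A F : Matrix ι ι R} {d : ι → R} (hF : IsUnit F.det) (h : A * F = F * diagonal d) :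
    A.charpoly = ∏ i, (X - C (d i)) := by
  have hA : A = F * diagonal d * F⁻¹ := by rw [← h, mul_nonsing_inv_cancel_right _ _ hF]
  rw [hA, ← charpoly_diagonal]
  exact charpoly_units_conj (nonsingInvUnit F hF) (diagonal d)

theorem Matrix.mem_spectrum_of_map_mul_eq_mul_diagonal {K L : Type*} [Field K] [Field L]
    (f : K →+* L) {A : Matrix ι ι K} {F : Matrix ι ι L} {d : ι → K} (hF : IsUnit F.det)
    (h : A.map f * F = F * diagonal fun i => f (d i)) (i : ι) : d i ∈ spectrum K A := by
  rw [mem_spectrum_iff_isRoot_charpoly]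
  refine IsRoot.of_map (f := f) ?_ f.injective
  rw [IsRoot, ← charpoly_map, charpoly_eq_prod_of_mul_eq_mul_diagonal hF h, eval_prod]
  exact Finset.prod_eq_zero (Finset.mem_univ i) (by simp)

theorem Matrix.map_aeval_mul_eq_mul_diagonal {K L : Type*} [CommRing K] [CommRing L]
    [Algebra K L] {A : Matrix ι ι K} {F : Matrix ι ι L} {d : ι → K}
    (h : A.map (algebraMap K L) * F = F * diagonal fun i => algebraMap K L (d i)) (q : K[X]) :
    (aeval A q).map (algebraMap K L) * F =
      F * diagonal fun i => algebraMap K L (q.eval (d i)) := by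
  have hmap : (aeval A q).map (algebraMap K L) = aeval (A.map (algebraMap K L)) q :=
    (aeval_algHom_apply (Algebra.ofId K L).mapMatrix A q).symm
  rw [hmap, aeval_mul_eq_mul_aeval h, aeval_diagonal]
  simp only [aeval_algebraMap_apply_eq_algebraMap_eval]

theorem Matrix.map_cfc_mul_conj_cfc_mul_eq_mul_diagonal {L : Type*} [Field L] [Algebra ℝ L]
    {A S : Matrix ι ι ℝ} (hA : IsSelfAdjoint A) (hS : S * S = 1) {F : Matrix ι ι L}
    (hF : IsUnit F.det) {d : ι → ℝ} {σ : ι → ι}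
    (h : A.map (algebraMap ℝ L) * F = F * diagonal fun i => algebraMap ℝ L (d i))
    (hσ : (S * A * S).map (algebraMap ℝ L) * F = F * diagonal fun i => algebraMap ℝ L (d (σ i)))
    (f g : ℝ → ℝ) :
    (cfc f A * S * cfc g A * S).map (algebraMap ℝ L) * F =
      F * diagonal fun i => algebraMap ℝ L (f (d i) * g (d (σ i))) := by
  have hspec := mem_spectrum_of_map_mul_eq_mul_diagonal (algebraMap ℝ L) hF h
  obtain ⟨qf, hqf, hqf_spec⟩ := exists_cfc_eq_aeval hA A.finite_real_spectrum f
  obtain ⟨qg, hqg, hqg_spec⟩ := exists_cfc_eq_aeval hA A.finite_real_spectrum g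
  rw [hqf, hqg, mul_assoc _ S, mul_assoc, aeval_conj_of_mul_self_eq_one hS, Matrix.map_mul,
    mul_assoc, map_aeval_mul_eq_mul_diagonal hσ, ← mul_assoc, map_aeval_mul_eq_mul_diagonal h,
    mul_assoc, diagonal_mul_diagonal]
  simp only [← map_mul, hqf_spec _ (hspec _), hqg_spec _ (hspec _)]

theorem Matrix.PosDef.spectrum_pos {A : Matrix ι ι ℝ} (hA : A.PosDef) {x : ℝ}
    (hx : x ∈ spectrum ℝ A) : 0 < x := by
  rw [hA.isHermitian.spectrum_real_eq_range_eigenvalues] at hx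
  obtain ⟨i, rfl⟩ := hx
  exact hA.eigenvalues_pos i

end Intertwining

section Fourier

variable {n : ℕ}

theorem pow_val_add_of_pow_eq_one {M : Type*} [Monoid M] {ζ : M} (hζ : ζ ^ n = 1) (a b : Fin n) :
    ζ ^ ((a + b : Fin n) : ℕ) = ζ ^ (a : ℕ) * ζ ^ (b : ℕ) := by
  rw [Fin.val_add, ← pow_eq_pow_mod _ hζ, pow_add]

theorem IsPrimitiveRoot.isUnit_det_vandermonde {K : Type*} [Field K] {ζ : K}
    (hζ : IsPrimitiveRoot ζ n) : IsUnit (vandermonde fun j : Fin n => ζ ^ (j : ℕ)).det :=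
  isUnit_iff_ne_zero.mpr <| det_vandermonde_ne_zero_iff.mpr fun a b hab =>
    Fin.ext (hζ.pow_inj a.isLt b.isLt hab)

theorem IsPrimitiveRoot.pow_half_eq_neg_one {K : Type*} [CommRing K] [IsDomain K] {ζ : K} {m : ℕ}
    (hζ : IsPrimitiveRoot ζ (m + m)) (hm : 0 < m) : ζ ^ m = -1 := by
  have h := hζ.pow_of_dvd hm.ne' ⟨2, by ring⟩
  rw [← two_mul, Nat.mul_div_cancel _ hm] at h
  exact h.eq_neg_one_of_two_right

theorem Complex.exp_two_pi_I_mul_div (k l n : ℕ) :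
    Complex.exp (2 * Real.pi * Complex.I * k * l / n) =
      (Complex.exp (2 * Real.pi * Complex.I / n) ^ l) ^ k := by
  rw [← pow_mul, ← Complex.exp_nat_mul]
  congr 1
  push_cast
  ring

variable {R : Type*} [CommRing R]

theorem sum_pow_mul_mul_pow_eq_sum_mul_pow_add {ζ : R} (hζ : ζ ^ n = 1) (s : Fin n)
    (u : Fin n → R) (k : Fin n) :
    ∑ l : Fin n, (ζ ^ (s : ℕ)) ^ (l : ℕ) * u l * (ζ ^ (l : ℕ)) ^ (k : ℕ) =
      ∑ l : Fin n, u l * (ζ ^ (l : ℕ)) ^ ((k + s : Fin n) : ℕ) := by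
  refine Finset.sum_congr rfl fun l _ => ?_
  have hζl : (ζ ^ (l : ℕ)) ^ n = 1 := by rw [← pow_mul, mul_comm, pow_mul, hζ, one_pow]
  rw [pow_val_add_of_pow_eq_one hζl, ← pow_mul, ← pow_mul, mul_comm (s : ℕ)]
  ring

variable [NeZero n]

theorem circulant_mul_vandermonde {ζ : R} (hζ : ζ ^ n = 1) {u : Fin n → R}
    (hu : ∀ l, u (-l) = u l) :
    circulant u * vandermonde (fun j : Fin n => ζ ^ (j : ℕ)) =
      vandermonde (fun j : Fin n => ζ ^ (j : ℕ)) *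
        diagonal fun k : Fin n => ∑ l, u l * (ζ ^ (l : ℕ)) ^ (k : ℕ) := by
  ext j k
  rw [mul_diagonal, mul_apply, Finset.mul_sum]
  refine (Fintype.sum_equiv (Equiv.addLeft j) _ _ fun d => ?_).symm
  simp only [Equiv.coe_addLeft, circulant_apply, vandermonde_apply, sub_add_cancel_left, hu,
    pow_val_add_of_pow_eq_one hζ, mul_pow]
  ring

theorem pow_val_neg_of_mul_self_eq_one {ω : R} (hω : ω ^ n = 1) (hω2 : ω * ω = 1) (l : Fin n) :
    ω ^ ((-l : Fin n) : ℕ) = ω ^ (l : ℕ) := by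
  have h1 := pow_val_add_of_pow_eq_one hω (-l) l
  have h2 : ω ^ (l : ℕ) * ω ^ (l : ℕ) = 1 := by rw [← mul_pow, hω2, one_pow]
  rw [neg_add_cancel, Fin.val_zero, pow_zero] at h1
  linear_combination (-ω ^ (l : ℕ)) * h1 + (-ω ^ ((-l : Fin n) : ℕ)) * h2

theorem diagonal_pow_mul_circulant_mul_diagonal_pow {ω : R} (hω : ω ^ n = 1) (hω2 : ω * ω = 1)
    (u : Fin n → R) :
    diagonal (fun i : Fin n => ω ^ (i : ℕ)) * circulant u *
        diagonal (fun j : Fin n => ω ^ (j : ℕ)) =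
      circulant fun l : Fin n => ω ^ (l : ℕ) * u l := by
  ext i j
  have hi : ω ^ (i : ℕ) = ω ^ ((i - j : Fin n) : ℕ) * ω ^ (j : ℕ) := by
    rw [← pow_val_add_of_pow_eq_one hω, sub_add_cancel]
  have hj : ω ^ (j : ℕ) * ω ^ (j : ℕ) = 1 := by rw [← mul_pow, hω2, one_pow]
  simp only [mul_diagonal, diagonal_mul, circulant_apply, hi]
  linear_combination (ω ^ ((i - j : Fin n) : ℕ) * u (i - j)) * hj

theorem map_circulant_mul_vandermonde {K L : Type*} [CommRing K] [CommRing L] [Algebra K L]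
    {ζ : L} (hζ : ζ ^ n = 1) {v : Fin n → K} (hv : ∀ l, v (-l) = v l)
    {Λ : Fin n → K}
    (hΛ : ∀ k, algebraMap K L (Λ k) = ∑ l, algebraMap K L (v l) * (ζ ^ (l : ℕ)) ^ (k : ℕ)) :
    (circulant v).map (algebraMap K L) * vandermonde (fun j : Fin n => ζ ^ (j : ℕ)) =
      vandermonde (fun j : Fin n => ζ ^ (j : ℕ)) * diagonal fun k => algebraMap K L (Λ k) := by
  rw [map_circulant, circulant_mul_vandermonde hζ fun l => congrArg (algebraMap K L) (hv l)]
  simp only [← hΛ]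

end Fourier

theorem Real.rpow_neg_half_mul_rpow_half {a b : ℝ} (ha : 0 ≤ a) (hb : 0 ≤ b) :
    a ^ (-(1 / 2) : ℝ) * b ^ (1 / 2 : ℝ) = √(b / a) := by
  rw [Real.sqrt_div hb, Real.sqrt_eq_rpow, Real.sqrt_eq_rpow, Real.rpow_neg ha, inv_mul_eq_div]

theorem Fin.prod_univ_add_half {M : Type*} [CommMonoid M] {m : ℕ} (hm : 0 < m)
    (g : Fin (m + m) → Fin (m + m) → M) :
    ∏ k, g k (k + ⟨m, Nat.lt_add_of_pos_right hm⟩) =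
      ∏ k : Fin m, g (castAdd m k) (natAdd m k) * g (natAdd m k) (castAdd m k) := by
  rw [Fin.prod_univ_add, ← Finset.prod_mul_distrib]
  refine Finset.prod_congr rfl fun k _ => ?_
  have hcast : castAdd m k + ⟨m, Nat.lt_add_of_pos_right hm⟩ = natAdd m k := by
    ext
    simp only [Fin.val_add, val_castAdd, val_natAdd]
    rw [Nat.mod_eq_of_lt (by omega), add_comm]
  have hnat : natAdd m k + ⟨m, Nat.lt_add_of_pos_right hm⟩ = castAdd m k := by
    ext
    simp only [Fin.val_add, val_castAdd, val_natAdd]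
    rw [add_right_comm, Nat.add_mod_left, Nat.mod_eq_of_lt (by omega)]
  rw [hcast, hnat]

theorem map_conj_neg_one_pow_circulant_mul_vandermonde {K L : Type*} [CommRing K] [CommRing L]
    [Algebra K L] {m : ℕ} (hm : 0 < m) {ζ : L} (hζ : ζ ^ (m + m) = 1) (hζm : ζ ^ m = -1)
    {v : Fin (m + m) → K} (hv : ∀ l, v (-l) = v l) {Λ : Fin (m + m) → K}
    (hΛ : ∀ k, algebraMap K L (Λ k) = ∑ l, algebraMap K L (v l) * (ζ ^ (l : ℕ)) ^ (k : ℕ)) :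
    (diagonal (fun k : Fin (m + m) => (-1 : K) ^ (k : ℕ)) * circulant v *
      diagonal (fun k : Fin (m + m) => (-1 : K) ^ (k : ℕ))).map (algebraMap K L) *
        vandermonde (fun j : Fin (m + m) => ζ ^ (j : ℕ)) =
      vandermonde (fun j : Fin (m + m) => ζ ^ (j : ℕ)) *
        diagonal fun k => algebraMap K L (Λ (k + ⟨m, Nat.lt_add_of_pos_right hm⟩)) := by
  have : NeZero (m + m) := ⟨by omega⟩
  have hsign : (-1 : K) ^ (m + m) = 1 := Even.neg_one_pow ⟨m, rfl⟩
  have hsign2 : (-1 : K) * -1 = 1 := by ring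
  rw [diagonal_pow_mul_circulant_mul_diagonal_pow hsign hsign2]
  refine map_circulant_mul_vandermonde hζ
    (fun l => by rw [pow_val_neg_of_mul_self_eq_one hsign hsign2, hv]) fun k => ?_
  rw [hΛ, ← sum_pow_mul_mul_pow_eq_sum_mul_pow_add hζ]
  refine Finset.sum_congr rfl fun l _ => ?_
  simp [hζm]

/-- For `n = m + m` even positive, `V` circulant symmetric
positive definite with Fourier eigenvalues `Λ_k = ∑_l v_l e^{2πikl/n}`,
`P = diag((-1)^k)` and `Q = V^{-1/2} P V^{1/2} P`, the characteristic
polynomial of `Q` factors as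
`det(λI - Q) = ∏_{k<n/2} (λ - √(Λ_{k+n/2}/Λ_k))(λ - √(Λ_k/Λ_{k+n/2}))`. -/
theorem charpoly_Q_even_odd_bisection
    (m : ℕ) (hm : 0 < m)
    (v : Fin (m + m) → ℝ) (hv : ∀ l, v (-l) = v l)
    (V : Matrix (Fin (m + m)) (Fin (m + m)) ℝ) (hV : V = Matrix.circulant v)
    (hVpd : V.PosDef)
    (Λ : Fin (m + m) → ℝ)
    (hΛ : ∀ k : Fin (m + m), (Λ k : ℂ) =
      ∑ l : Fin (m + m), (v l : ℂ) *
        Complex.exp (2 * Real.pi * Complex.I * (k : ℕ) * (l : ℕ) / (m + m : ℕ)))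
    (P : Matrix (Fin (m + m)) (Fin (m + m)) ℝ)
    (hP : P = Matrix.diagonal (fun k : Fin (m + m) => (-1 : ℝ) ^ (k : ℕ)))
    (Q : Matrix (Fin (m + m)) (Fin (m + m)) ℝ)
    (hQ : Q = mpow V (-(1/2)) * P * mpow V (1/2) * P) :
    Q.charpoly = ∏ k : Fin m,
      ((X - C (Real.sqrt (Λ (Fin.natAdd m k) / Λ (Fin.castAdd m k))))
        * (X - C (Real.sqrt (Λ (Fin.castAdd m k) / Λ (Fin.natAdd m k))))) := by
  subst hV hP hQ
  have : NeZero (m + m) := ⟨by omega⟩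
  set ζ : ℂ := Complex.exp (2 * Real.pi * Complex.I / (m + m : ℕ))
  have hζ : IsPrimitiveRoot ζ (m + m) := Complex.isPrimitiveRoot_exp _ (NeZero.ne _)
  have hF := hζ.isUnit_det_vandermonde
  have hΛζ : ∀ k, algebraMap ℝ ℂ (Λ k) = ∑ l, algebraMap ℝ ℂ (v l) * (ζ ^ (l : ℕ)) ^ (k : ℕ) := by
    simpa only [Complex.exp_two_pi_I_mul_div, Complex.coe_algebraMap] using hΛ
  have hVF := map_circulant_mul_vandermonde hζ.pow_eq_one hv hΛζ
  have hspec := mem_spectrum_of_map_mul_eq_mul_diagonal (algebraMap ℝ ℂ) hF hVF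
  have hP2 : diagonal (fun k : Fin (m + m) => (-1 : ℝ) ^ (k : ℕ)) *
      diagonal (fun k : Fin (m + m) => (-1 : ℝ) ^ (k : ℕ)) = 1 := by
    simp only [diagonal_mul_diagonal, ← mul_pow, mul_neg_one, neg_neg, one_pow, diagonal_one]
  have hQF := map_cfc_mul_conj_cfc_mul_eq_mul_diagonal hVpd.isHermitian.isSelfAdjoint hP2 hF hVF
    (map_conj_neg_one_pow_circulant_mul_vandermonde hm hζ.pow_eq_one (hζ.pow_half_eq_neg_one hm)
      hv hΛζ)
    (· ^ (-(1 / 2) : ℝ)) (· ^ (1 / 2 : ℝ))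
  simp only [Real.rpow_neg_half_mul_rpow_half (hVpd.spectrum_pos (hspec _)).le
    (hVpd.spectrum_pos (hspec _)).le] at hQF
  apply map_injective _ (algebraMap ℝ ℂ).injective
  rw [← charpoly_map, mpow, mpow, charpoly_eq_prod_of_mul_eq_mul_diagonal hF hQF,
    Fin.prod_univ_add_half hm fun k k' => X - C (algebraMap ℝ ℂ √(Λ k' / Λ k))]
  simp [Polynomial.map_prod]
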